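/- Let ν ∈ S¹∩ℚ² be a rational direction, θ < λ, and k ∈ ℤ². If ⟨k,ν⟩ ≤ 0 then τ_k u_{1,ν}^{θ,λ} ≤ u_{1,ν}^{θ,λ} pointwise, and if ⟨k,ν⟩ ≥ 0 then τ_k u_{1,ν}^{θ,λ} ≥ u_{1,ν}^{θ,λ} pointwise (Birkhoff property of the infimal minimizer). -/

import Mathlib

open scoped ENNReal Classical

/-- The canonical embedding of `ℤ³` into Euclidean `ℝ³`. -/
noncomputable def toR3 (x : ℤ × ℤ × ℤ) : EuclideanSpace ℝ (Fin 3) :=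
  (WithLp.equiv 2 (Fin 3 → ℝ)).symm ![(x.1 : ℝ), (x.2.1 : ℝ), (x.2.2 : ℝ)]

/-- The canonical embedding of `ℤ²` into Euclidean `ℝ²`. -/
noncomputable def toR2 (x : ℤ × ℤ) : EuclideanSpace ℝ (Fin 2) :=
  (WithLp.equiv 2 (Fin 2 → ℝ)).symm ![(x.1 : ℝ), (x.2 : ℝ)]

/-- Membership in the slab `ℤ²_M = ℤ² × {0,…,M}`. -/
def inSlab (M : ℕ) (x : ℤ × ℤ × ℤ) : Prop := 0 ≤ x.2.2 ∧ x.2.2 ≤ (M : ℤ)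

/-- The energy `E_M(u,Γ) = ∑_{x ∈ Γ_M} ∑_{y ∈ ℤ²_M} c(x-y)|u(x)-u(y)|`, valued in `[0,∞]`. -/
noncomputable def energyM (M : ℕ) (c : EuclideanSpace ℝ (Fin 3) → ℝ)
    (u : ℤ × ℤ × ℤ → ℝ) (Γ : Set (ℤ × ℤ)) : ℝ≥0∞ :=
  ∑' x : ℤ × ℤ × ℤ, ∑' y : ℤ × ℤ × ℤ,
    if (x.1, x.2.1) ∈ Γ ∧ inSlab M x ∧ inSlab M y then
      ENNReal.ofReal (c (toR3 x - toR3 y) * |u x - u y|) else 0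

/-- A direction `ν ∈ S¹` is rational if both its components are rational numbers. -/
def IsRationalDir (ν : EuclideanSpace ℝ (Fin 2)) : Prop :=
  ∃ a b : ℚ, ν 0 = (a : ℝ) ∧ ν 1 = (b : ℝ)

/-- The `ℤ`-module `ℤ_ν = {z ∈ ℤ² : ⟨z,ν⟩ = 0}`. -/
def Znu (ν : EuclideanSpace ℝ (Fin 2)) : Set (ℤ × ℤ) :=
  {z | @inner ℝ _ _ (toR2 z) ν = 0}

/-- The set `mℤ_ν` of `m`-fold multiples of elements of `ℤ_ν`. -/
def mZnu (m : ℕ) (ν : EuclideanSpace ℝ (Fin 2)) : Set (ℤ × ℤ) :=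
  {z | ∃ w ∈ Znu ν, z = ((m : ℤ) * w.1, (m : ℤ) * w.2)}

/-- `F` is a fundamental domain of `ℤ²/mℤ_ν`: every `z ∈ ℤ²` is uniquely `z₁ + z₂` with
`z₁ ∈ mℤ_ν` and `z₂ ∈ F`. -/
def IsFundDomain (m : ℕ) (ν : EuclideanSpace ℝ (Fin 2)) (F : Set (ℤ × ℤ)) : Prop :=
  ∀ z : ℤ × ℤ, ∃! w : ℤ × ℤ, w ∈ F ∧ z - w ∈ mZnu m ν

/-- `u : ℤ²_M → {±1}` is `(m,ν)`-periodic. -/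
def PeriodicMN (M m : ℕ) (ν : EuclideanSpace ℝ (Fin 2)) (u : ℤ × ℤ × ℤ → ℝ) : Prop :=
  ∀ x : ℤ × ℤ × ℤ, inSlab M x → ∀ z ∈ Znu ν,
    u (x.1 + (m : ℤ) * z.1, x.2.1 + (m : ℤ) * z.2, x.2.2) = u x

/-- The class `A_{m,ν}^{θ,λ}` of `(m,ν)`-periodic `{±1}`-configurations with `u = 1` below
level `θ` and `u = -1` above level `λ` (levels measured by `⟨P₂·,ν⟩`). -/
def AdmissibleA (M m : ℕ) (ν : EuclideanSpace ℝ (Fin 2)) (θ lam : ℝ)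
    (u : ℤ × ℤ × ℤ → ℝ) : Prop :=
  (∀ x, inSlab M x → u x = 1 ∨ u x = -1) ∧
  PeriodicMN M m ν u ∧
  (∀ x, inSlab M x → @inner ℝ _ _ (toR2 (x.1, x.2.1)) ν < θ → u x = 1) ∧
  (∀ x, inSlab M x → lam < @inner ℝ _ _ (toR2 (x.1, x.2.1)) ν → u x = -1)

/-- Membership in the class `M_{m,ν}^{θ,λ}` of minimizers of `E_M(·,F_{m,ν})` in
`A_{m,ν}^{θ,λ}`. -/
def IsMinA (M : ℕ) (c : EuclideanSpace ℝ (Fin 3) → ℝ) (m : ℕ)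
    (ν : EuclideanSpace ℝ (Fin 2)) (θ lam : ℝ) (F : Set (ℤ × ℤ))
    (u : ℤ × ℤ × ℤ → ℝ) : Prop :=
  AdmissibleA M m ν θ lam u ∧
  ∀ v, AdmissibleA M m ν θ lam v → energyM M c u F ≤ energyM M c v F

/-- `u` is the infimal minimizer `u_{m,ν}^{θ,λ}`: the pointwise least element (on the slab)
of the class of minimizers `M_{m,ν}^{θ,λ}`. -/
def IsInfMinA (M : ℕ) (c : EuclideanSpace ℝ (Fin 3) → ℝ) (m : ℕ)
    (ν : EuclideanSpace ℝ (Fin 2)) (θ lam : ℝ) (F : Set (ℤ × ℤ))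
    (u : ℤ × ℤ × ℤ → ℝ) : Prop :=
  IsMinA M c m ν θ lam F u ∧
  ∀ v, IsMinA M c m ν θ lam F v → ∀ x, inSlab M x → u x ≤ v x

/-! Let `⟨k, ν⟩ ≥ 0`. Since `τ_k u` is `u` moved by `⟨k, ν⟩` in direction `ν`, the configurations
`u ⊓ τ_k u` and `τ_{-k} u ⊔ u` still satisfy the boundary conditions of `A^{θ,λ}`. For periodic
configurations the energy over a fundamental domain is translation invariant, and it is
submodular, `E(v ⊓ w) + E(v ⊔ w) ≤ E(v) + E(w)`, because
`|min a b - min c d| + |max a b - max c d| ≤ |a - c| + |b - d|`. As `E(τ_k u) = E(u)` and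
`E(u ⊔ τ_k u) = E(τ_{-k} u ⊔ u) ≥ E(u)`, submodularity forces `E(u ⊓ τ_k u) ≤ E(u)`: so `u ⊓ τ_k u`
is a minimizer, and infimality of `u` gives `u ≤ u ⊓ τ_k u ≤ τ_k u`. -/

open scoped RealInnerProductSpace

/-- The translate `τ_k v` of the paper. -/
def slabTranslate (k : ℤ × ℤ) (v : ℤ × ℤ × ℤ → ℝ) : ℤ × ℤ × ℤ → ℝ :=
  fun x => v (x - (k.1, k.2, 0))

lemma slabTranslate_slabTranslate (a b : ℤ × ℤ) (v : ℤ × ℤ × ℤ → ℝ) :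
    slabTranslate a (slabTranslate b v) = slabTranslate (a + b) v := by
  funext x
  simp only [slabTranslate]
  congr 1
  ext <;> simp <;> ring

lemma slabTranslate_zero (v : ℤ × ℤ × ℤ → ℝ) : slabTranslate 0 v = v := by
  funext x
  simp [slabTranslate, Prod.mk_zero_zero]

lemma slabTranslate_sup (k : ℤ × ℤ) (v w : ℤ × ℤ × ℤ → ℝ) :
    slabTranslate k (v ⊔ w) = slabTranslate k v ⊔ slabTranslate k w := rfl

lemma toR2_neg (a : ℤ × ℤ) : toR2 (-a) = -toR2 a := by
  ext i; fin_cases i <;> simp [toR2]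

lemma toR2_add (a b : ℤ × ℤ) : toR2 (a + b) = toR2 a + toR2 b := by
  ext i; fin_cases i <;> simp [toR2]

lemma toR2_zero : toR2 0 = 0 := by
  ext i; fin_cases i <;> simp [toR2]

lemma toR2_sub_column (x : ℤ × ℤ × ℤ) (k : ℤ × ℤ) :
    toR2 ((x - (k.1, k.2, 0)).1, (x - (k.1, k.2, 0)).2.1) = toR2 (x.1, x.2.1) - toR2 k := by
  ext i; fin_cases i <;> simp [toR2]

lemma toR3_sub_sub_toR3_sub (x y h : ℤ × ℤ × ℤ) :
    toR3 (x - h) - toR3 (y - h) = toR3 x - toR3 y := by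
  ext i; fin_cases i <;> simp [toR3]

@[simp]
lemma inSlab_sub_column {M : ℕ} {x : ℤ × ℤ × ℤ} {k : ℤ × ℤ} :
    inSlab M (x - (k.1, k.2, 0)) ↔ inSlab M x := by
  simp [inSlab]

lemma abs_min_sub_min_add_abs_max_sub_max_le (a b c d : ℝ) :
    |min a b - min c d| + |max a b - max c d| ≤ |a - c| + |b - d| := by
  grind

def mZnuSubgroup (m : ℕ) (ν : EuclideanSpace ℝ (Fin 2)) : AddSubgroup (ℤ × ℤ) where
  carrier := mZnu m ν
  zero_mem' := ⟨0, by simp [Znu, toR2_zero], by ext <;> simp⟩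
  add_mem' := by
    rintro _ _ ⟨a, ha, rfl⟩ ⟨b, hb, rfl⟩
    refine ⟨a + b, ?_, by simp [mul_add]⟩
    simp_all [Znu, toR2_add, inner_add_left]
  neg_mem' := by
    rintro _ ⟨a, ha, rfl⟩
    refine ⟨-a, ?_, by simp⟩
    simp_all [Znu, toR2_neg, inner_neg_left]

section FundDomain

variable {m : ℕ} {ν : EuclideanSpace ℝ (Fin 2)} {F : Set (ℤ × ℤ)}

lemma IsFundDomain.bijective_mk_sub (hF : IsFundDomain m ν F) (h : ℤ × ℤ) :
    Function.Bijective fun z : F =>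
      (QuotientAddGroup.mk (z - h : ℤ × ℤ) : (ℤ × ℤ) ⧸ mZnuSubgroup m ν) := by
  constructor
  · rintro ⟨z₁, hz₁⟩ ⟨z₂, hz₂⟩ hz
    rw [QuotientAddGroup.eq] at hz
    have hdiff : z₁ - z₂ ∈ mZnuSubgroup m ν := by
      simpa using (mZnuSubgroup m ν).neg_mem hz
    have hself : z₁ - z₁ ∈ mZnuSubgroup m ν := by simp
    exact Subtype.ext ((hF z₁).unique ⟨hz₁, hself⟩ ⟨hz₂, hdiff⟩)
  · rintro ⟨y⟩
    obtain ⟨w, ⟨hw, hyw⟩, -⟩ := hF (y + h)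
    refine ⟨⟨w, hw⟩, QuotientAddGroup.eq.2 ?_⟩
    rwa [show -(w - h) + y = y + h - w by abel]

lemma IsFundDomain.tsum_sub (hF : IsFundDomain m ν F) {G : ℤ × ℤ → ℝ≥0∞}
    (hG : ∀ z, ∀ w ∈ mZnu m ν, G (z + w) = G z) (h : ℤ × ℤ) :
    ∑' z : F, G (z - h) = ∑' z : F, G z := by
  let Gq : (ℤ × ℤ) ⧸ mZnuSubgroup m ν → ℝ≥0∞ := Quotient.lift G fun a b hab => by
    rw [← hG a (-a + b) (QuotientAddGroup.leftRel_apply.1 hab), add_neg_cancel_left]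
  have hsum : ∀ h, ∑' z : F, G (z - h) = ∑' q, Gq q := fun h =>
    (Equiv.ofBijective _ (hF.bijective_mk_sub h)).tsum_eq Gq
  simpa using (hsum h).trans (hsum 0).symm

end FundDomain

noncomputable def columnEnergy (M : ℕ) (c : EuclideanSpace ℝ (Fin 3) → ℝ) (v : ℤ × ℤ × ℤ → ℝ)
    (z : ℤ × ℤ) : ℝ≥0∞ :=
  ∑' t : ℤ, ∑' y : ℤ × ℤ × ℤ,
    if inSlab M (z.1, z.2, t) ∧ inSlab M y then
      ENNReal.ofReal (c (toR3 (z.1, z.2, t) - toR3 y) * |v (z.1, z.2, t) - v y|) else 0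

section ColumnEnergy

variable {M : ℕ} {c : EuclideanSpace ℝ (Fin 3) → ℝ} {v : ℤ × ℤ × ℤ → ℝ}

lemma energyM_eq_tsum_columnEnergy (Γ : Set (ℤ × ℤ)) :
    energyM M c v Γ = ∑' z : Γ, columnEnergy M c v z := by
  rw [tsum_subtype Γ (columnEnergy M c v), energyM, ← (Equiv.prodAssoc ℤ ℤ ℤ).tsum_eq,
    ENNReal.tsum_prod']
  refine tsum_congr fun z => ?_
  by_cases hz : z ∈ Γ <;> simp [hz, columnEnergy]

lemma columnEnergy_slabTranslate (k z : ℤ × ℤ) :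
    columnEnergy M c (slabTranslate k v) z = columnEnergy M c v (z - k) := by
  refine tsum_congr fun t => ?_
  have hx : ((z - k).1, (z - k).2, t) = ((z.1, z.2, t) - (k.1, k.2, 0) : ℤ × ℤ × ℤ) := by
    ext <;> simp
  rw [hx, eq_comm, ← (Equiv.subRight ((k.1, k.2, 0) : ℤ × ℤ × ℤ)).tsum_eq]
  simp only [Equiv.subRight_apply, slabTranslate, inSlab_sub_column, toR3_sub_sub_toR3_sub]

lemma columnEnergy_congr {w : ℤ × ℤ × ℤ → ℝ} (hvw : ∀ x, inSlab M x → v x = w x) (z : ℤ × ℤ) :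
    columnEnergy M c v z = columnEnergy M c w z := by
  refine tsum_congr fun t => tsum_congr fun y => ?_
  split_ifs with h
  · rw [hvw _ h.1, hvw _ h.2]
  · rfl

end ColumnEnergy

namespace PeriodicMN

variable {M m : ℕ} {ν : EuclideanSpace ℝ (Fin 2)} {v w : ℤ × ℤ × ℤ → ℝ}

lemma slabTranslate_apply_eq (hv : PeriodicMN M m ν v) {k : ℤ × ℤ} (hk : k ∈ mZnu m ν)
    {x : ℤ × ℤ × ℤ} (hx : inSlab M x) : slabTranslate k v x = v x := by
  obtain ⟨a, ha, rfl⟩ := hk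
  have := hv _ (inSlab_sub_column (k := (m * a.1, m * a.2)).2 hx) a ha
  rw [slabTranslate, ← this]
  congr 1
  ext <;> simp

protected lemma slabTranslate (hv : PeriodicMN M m ν v) (k : ℤ × ℤ) :
    PeriodicMN M m ν (slabTranslate k v) := by
  intro x hx a ha
  simp only [slabTranslate]
  rw [← hv _ (inSlab_sub_column.2 hx) a ha]
  congr 1
  ext <;> simp <;> ring

protected lemma inf (hv : PeriodicMN M m ν v) (hw : PeriodicMN M m ν w) :
    PeriodicMN M m ν (v ⊓ w) := fun x hx a ha => by
  simp only [Pi.inf_apply, hv x hx a ha, hw x hx a ha]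

protected lemma sup (hv : PeriodicMN M m ν v) (hw : PeriodicMN M m ν w) :
    PeriodicMN M m ν (v ⊔ w) := fun x hx a ha => by
  simp only [Pi.sup_apply, hv x hx a ha, hw x hx a ha]

lemma columnEnergy_add (hv : PeriodicMN M m ν v) (c : EuclideanSpace ℝ (Fin 3) → ℝ)
    (z : ℤ × ℤ) {k : ℤ × ℤ} (hk : k ∈ mZnu m ν) :
    columnEnergy M c v (z + k) = columnEnergy M c v z := by
  rw [columnEnergy_congr (fun x hx => (hv.slabTranslate_apply_eq hk hx).symm),
    columnEnergy_slabTranslate, add_sub_cancel_right]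

lemma energyM_slabTranslate (hv : PeriodicMN M m ν v) (c : EuclideanSpace ℝ (Fin 3) → ℝ)
    {F : Set (ℤ × ℤ)} (hF : IsFundDomain m ν F) (k : ℤ × ℤ) :
    energyM M c (slabTranslate k v) F = energyM M c v F := by
  simp only [energyM_eq_tsum_columnEnergy, columnEnergy_slabTranslate]
  exact hF.tsum_sub (fun z _ hk => hv.columnEnergy_add c z hk) k

end PeriodicMN

namespace AdmissibleA

variable {M m : ℕ} {ν : EuclideanSpace ℝ (Fin 2)} {θ lam θ' lam' : ℝ} {u v : ℤ × ℤ × ℤ → ℝ}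

protected lemma inf (hu : AdmissibleA M m ν θ lam u) (hv : AdmissibleA M m ν θ' lam' v) :
    AdmissibleA M m ν (min θ θ') (min lam lam') (u ⊓ v) := by
  obtain ⟨hu₁, hup, hub, hua⟩ := hu
  obtain ⟨hv₁, hvp, hvb, hva⟩ := hv
  refine ⟨fun x hx => ?_, hup.inf hvp, fun x hx hlt => ?_, fun x hx hgt => ?_⟩
  · rcases hu₁ x hx with h₁ | h₁ <;> rcases hv₁ x hx with h₂ | h₂ <;> simp [h₁, h₂]
  · rw [lt_min_iff] at hlt
    simp [hub x hx hlt.1, hvb x hx hlt.2]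
  · rw [min_lt_iff] at hgt
    rcases hgt with h | h
    · rcases hv₁ x hx with h₂ | h₂ <;> simp [hua x hx h, h₂]
    · rcases hu₁ x hx with h₁ | h₁ <;> simp [hva x hx h, h₁]

protected lemma sup (hu : AdmissibleA M m ν θ lam u) (hv : AdmissibleA M m ν θ' lam' v) :
    AdmissibleA M m ν (max θ θ') (max lam lam') (u ⊔ v) := by
  obtain ⟨hu₁, hup, hub, hua⟩ := hu
  obtain ⟨hv₁, hvp, hvb, hva⟩ := hv
  refine ⟨fun x hx => ?_, hup.sup hvp, fun x hx hlt => ?_, fun x hx hgt => ?_⟩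
  · rcases hu₁ x hx with h₁ | h₁ <;> rcases hv₁ x hx with h₂ | h₂ <;> simp [h₁, h₂]
  · rw [lt_max_iff] at hlt
    rcases hlt with h | h
    · rcases hv₁ x hx with h₂ | h₂ <;> simp [hub x hx h, h₂]
    · rcases hu₁ x hx with h₁ | h₁ <;> simp [hvb x hx h, h₁]
  · rw [max_lt_iff] at hgt
    simp [hua x hx hgt.1, hva x hx hgt.2]

protected lemma slabTranslate (hu : AdmissibleA M m ν θ lam u) (k : ℤ × ℤ) :
    AdmissibleA M m ν (θ + ⟪toR2 k, ν⟫) (lam + ⟪toR2 k, ν⟫) (slabTranslate k u) := by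
  obtain ⟨hu₁, hup, hub, hua⟩ := hu
  refine ⟨fun x hx => hu₁ _ (inSlab_sub_column.2 hx), hup.slabTranslate k,
    fun x hx hlt => hub _ (inSlab_sub_column.2 hx) ?_,
    fun x hx hgt => hua _ (inSlab_sub_column.2 hx) ?_⟩ <;>
  · rw [toR2_sub_column, inner_sub_left]
    linarith

end AdmissibleA

lemma energyM_inf_add_energyM_sup_le (M : ℕ) (c : EuclideanSpace ℝ (Fin 3) → ℝ)
    (v w : ℤ × ℤ × ℤ → ℝ) (Γ : Set (ℤ × ℤ)) :
    energyM M c (v ⊓ w) Γ + energyM M c (v ⊔ w) Γ ≤ energyM M c v Γ + energyM M c w Γ := by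
  simp only [energyM, ← ENNReal.tsum_add]
  refine ENNReal.tsum_le_tsum fun x => ENNReal.tsum_le_tsum fun y => ?_
  split_ifs
  · simp only [ENNReal.ofReal_mul' (abs_nonneg _), ← mul_add,
      ← ENNReal.ofReal_add (abs_nonneg _) (abs_nonneg _), Pi.inf_apply, Pi.sup_apply]
    exact mul_le_mul_right (ENNReal.ofReal_le_ofReal (abs_min_sub_min_add_abs_max_sub_max_le ..)) _
  · simp

section Minimizer

variable {M m : ℕ} {c : EuclideanSpace ℝ (Fin 3) → ℝ} {ν : EuclideanSpace ℝ (Fin 2)}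
  {θ lam : ℝ} {F : Set (ℤ × ℤ)} {u : ℤ × ℤ × ℤ → ℝ}

lemma IsMinA.isMinA_inf_slabTranslate (hu : IsMinA M c m ν θ lam F u) (hF : IsFundDomain m ν F)
    {k : ℤ × ℤ} (hk : 0 ≤ ⟪toR2 k, ν⟫) : IsMinA M c m ν θ lam F (u ⊓ slabTranslate k u) := by
  obtain ⟨hA, hmin⟩ := hu
  have hA_inf : AdmissibleA M m ν θ lam (u ⊓ slabTranslate k u) := by
    simpa [hk] using hA.inf (hA.slabTranslate k)
  have hA_sup : AdmissibleA M m ν θ lam (slabTranslate (-k) u ⊔ u) := by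
    simpa [toR2_neg, inner_neg_left, hk, ← sub_eq_add_neg] using (hA.slabTranslate (-k)).sup hA
  have hE_translate : energyM M c (slabTranslate k u) F = energyM M c u F :=
    hA.2.1.energyM_slabTranslate c hF k
  have hE_sup : energyM M c u F ≤ energyM M c (u ⊔ slabTranslate k u) F := calc
    energyM M c u F ≤ energyM M c (slabTranslate (-k) u ⊔ u) F := hmin _ hA_sup
    _ = energyM M c (slabTranslate k (slabTranslate (-k) u ⊔ u)) F :=
      (hA_sup.2.1.energyM_slabTranslate c hF k).symm
    _ = energyM M c (u ⊔ slabTranslate k u) F := by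
      rw [slabTranslate_sup, slabTranslate_slabTranslate, add_neg_cancel, slabTranslate_zero,
        sup_comm]
  refine ⟨hA_inf, fun v hv => le_trans ?_ (hmin v hv)⟩
  rcases eq_or_ne (energyM M c u F) ⊤ with htop | htop
  · exact htop ▸ le_top
  refine (ENNReal.add_le_add_iff_right htop).1 ?_
  calc energyM M c (u ⊓ slabTranslate k u) F + energyM M c u F
      ≤ energyM M c (u ⊓ slabTranslate k u) F + energyM M c (u ⊔ slabTranslate k u) F := by
        gcongr
    _ ≤ energyM M c u F + energyM M c (slabTranslate k u) F :=
        energyM_inf_add_energyM_sup_le M c _ _ F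
    _ = energyM M c u F + energyM M c u F := by rw [hE_translate]

lemma IsInfMinA.le_slabTranslate (hu : IsInfMinA M c m ν θ lam F u) (hF : IsFundDomain m ν F)
    {k : ℤ × ℤ} (hk : 0 ≤ ⟪toR2 k, ν⟫) {x : ℤ × ℤ × ℤ} (hx : inSlab M x) :
    u x ≤ slabTranslate k u x :=
  (hu.2 _ (hu.1.isMinA_inf_slabTranslate hF hk) x hx).trans inf_le_right

end Minimizer

theorem infimal_minimizer_birkhoff_general
    (c : EuclideanSpace ℝ (Fin 3) → ℝ)
    (M : ℕ)
    (ν : EuclideanSpace ℝ (Fin 2))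
    (θ lam : ℝ)
    (F1 : Set (ℤ × ℤ)) (hF1 : IsFundDomain 1 ν F1)
    (u : ℤ × ℤ × ℤ → ℝ) (hu : IsInfMinA M c 1 ν θ lam F1 u)
    (k : ℤ × ℤ) :
    (@inner ℝ _ _ (toR2 k) ν ≤ 0 →
      ∀ x, inSlab M x → u (x - (k.1, k.2, 0)) ≤ u x) ∧
    (0 ≤ @inner ℝ _ _ (toR2 k) ν →
      ∀ x, inSlab M x → u x ≤ u (x - (k.1, k.2, 0))) := by
  refine ⟨fun hk x hx => ?_, fun hk x hx => hu.le_slabTranslate hF1 hk hx⟩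
  have hk' : 0 ≤ ⟪toR2 (-k), ν⟫ := by
    rw [toR2_neg, inner_neg_left]
    linarith
  have hshift : x - (k.1, k.2, 0) - (-k.1, -k.2, 0) = x := by ext <;> simp
  simpa [slabTranslate, hshift] using
    hu.le_slabTranslate hF1 hk' (inSlab_sub_column (k := k) |>.2 hx)

/-- **Birkhoff property of the infimal minimizer** (Lemma A.6): for `k ∈ ℤ²`,
`τ_k u_{1,ν}^{θ,λ} ≤ u_{1,ν}^{θ,λ}` on the slab if `⟨k,ν⟩ ≤ 0`, and
`τ_k u_{1,ν}^{θ,λ} ≥ u_{1,ν}^{θ,λ}` on the slab if `⟨k,ν⟩ ≥ 0`. -/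
theorem infimal_minimizer_birkhoff
    (L Cbar c0 : ℝ) (hL : 0 < L) (hCbar : 0 < Cbar) (hc0 : 0 < c0)
    (c : EuclideanSpace ℝ (Fin 3) → ℝ)
    (hc_nonneg : ∀ z, 0 ≤ c z)
    (hc_bd : ∀ z, c z ≤ Cbar)
    (hc_range : ∀ z : EuclideanSpace ℝ (Fin 3), L ≤ ‖z‖ → c z = 0)
    (hc_coer : ∀ i : Fin 3,
      c0 ≤ c (EuclideanSpace.single i (1 : ℝ)) ∧ c0 ≤ c (-EuclideanSpace.single i (1 : ℝ)))
    (M : ℕ)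
    (ν : EuclideanSpace ℝ (Fin 2)) (hν : ‖ν‖ = 1) (hrat : IsRationalDir ν)
    (θ lam : ℝ) (hθlam : θ < lam)
    (F1 : Set (ℤ × ℤ)) (hF1 : IsFundDomain 1 ν F1)
    (u : ℤ × ℤ × ℤ → ℝ) (hu : IsInfMinA M c 1 ν θ lam F1 u)
    (k : ℤ × ℤ) :
    (@inner ℝ _ _ (toR2 k) ν ≤ 0 →
      ∀ x, inSlab M x → u (x - (k.1, k.2, 0)) ≤ u x) ∧
    (0 ≤ @inner ℝ _ _ (toR2 k) ν →
      ∀ x, inSlab M x → u x ≤ u (x - (k.1, k.2, 0))) :=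
  infimal_minimizer_birkhoff_general c M ν θ lam F1 hF1 u hu k
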